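/- arXiv:2507.15612 — 3 statements merged into one kernel-verified Lean document; each statement's English description precedes it below -/
import Mathlib

section
/- The influence function is exactly unbiased for h(β,P) when the nuisance pair (δ, π₁) is correctly specified: if in the candidate nuisance functions one sets δ̄ = δ (the true ratio (μ₁−μ₀)/(λ₁−λ₀)) and π̄₁ = π₁ (the true instrument propensity), while ρ̄, λ̄₀, λ̄₁, μ̄₀, μ̄₁ are arbitrary, then the second-order remainder R(P̄,P) = h(β,P̄) − h(β,P) + E_P[ḣ(β,O,P̄)] equals zero. -/
/-!
Conditioning on `(Z, X)` replaces `M(Y)(1 - A)` and `A` in the correction term of `ḣ(β, O, P̄)` by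
`μ_Z` and `λ_Z`, leaving `(ρ̄ / δ̄^A) (2Z - 1) / π̄_Z · (μ_Z - μ̄_Z - (λ_Z - λ̄_Z) δ̄)`. The last
factor changes by `δ^A (δ - δ̄)` between `Z = 0` and `Z = 1`, so it is a function of `X` alone once
`δ̄ = δ`; and for `Z ∈ {0, 1}` the weight is `(2Z - 1) / π̄_Z = (Z - π̄₁) / (π̄₁ (1 - π̄₁))`, whose
conditional mean given `X` vanishes once `π̄₁ = π₁`. Conditioning `A` on `X` turns `E[δ A]` into
`h(β, P)`. Every one of these steps is the orthogonality of `g - E[g | V]` to bounded functions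
of `V`.
-/

open MeasureTheory

section AbsBounds

variable {a b A B c : ℝ}

theorem abs_mul_le_mul_of_abs_le (ha : |a| ≤ A) (hb : |b| ≤ B) : |a * b| ≤ A * B := by
  rw [abs_mul]
  exact mul_le_mul ha hb (abs_nonneg b) ((abs_nonneg a).trans ha)

theorem abs_sub_le_add_of_abs_le (ha : |a| ≤ A) (hb : |b| ≤ B) : |a - b| ≤ A + B :=
  (abs_sub a b).trans (add_le_add ha hb)

theorem abs_div_le_div_of_abs_le (ha : |a| ≤ A) (hc : 0 < c) (hb : c ≤ |b|) :
    |a / b| ≤ A / c := by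
  rw [abs_div]
  exact div_le_div₀ ((abs_nonneg a).trans ha) ha hc hb

theorem mul_self_le_abs_mul_one_sub (hc : 0 < c) (ha : c ≤ a ∧ a ≤ 1 - c) :
    c * c ≤ |a * (1 - a)| := by
  obtain ⟨h₀, h₁⟩ := ha
  rw [abs_of_pos (by nlinarith)]
  nlinarith

end AbsBounds

section Orthogonality

variable {Ω : Type*} [m₀ : MeasurableSpace Ω] {P : Measure Ω} [IsFiniteMeasure P]

theorem integrable_of_eq_zero_or_eq_one {f : Ω → ℝ} (hf : Measurable f)
    (h01 : ∀ ω, f ω = 0 ∨ f ω = 1) : Integrable f P :=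
  .of_bound hf.aestronglyMeasurable 1
    (.of_forall fun ω => by rcases h01 ω with h | h <;> simp [h])

theorem integrable_mul_sub_condExp_and_integral_eq_zero {m : MeasurableSpace Ω} (hm : m ≤ m₀)
    {φ g G : Ω → ℝ} (hφ : StronglyMeasurable[m] φ) (hφC : ∃ C, ∀ ω, |φ ω| ≤ C)
    (hg : Integrable g P) (hG : P[g | m] =ᵐ[P] G) :
    Integrable (fun ω => φ ω * (g ω - G ω)) P ∧ ∫ ω, φ ω * (g ω - G ω) ∂P = 0 := by
  obtain ⟨C, hC⟩ := hφC
  have hφ' : AEStronglyMeasurable[m₀] φ P := (hφ.mono hm).aestronglyMeasurable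
  have hGint : Integrable G P := integrable_condExp.congr hG
  have hφg : Integrable (fun ω => φ ω * g ω) P := hg.bdd_mul hφ' (.of_forall hC)
  have hφG : Integrable (fun ω => φ ω * G ω) P := hGint.bdd_mul hφ' (.of_forall hC)
  refine ⟨(hg.sub' hGint).bdd_mul hφ' (.of_forall hC), ?_⟩
  simp_rw [mul_sub]
  rw [integral_sub hφg hφG, sub_eq_zero, ← integral_condExp hm]
  refine integral_congr_ae ((condExp_mul_of_stronglyMeasurable_left hφ hφg hg).trans ?_)
  filter_upwards [hG] with ω hω
  simp [hω]

end Orthogonality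

section InstrumentalVariables

variable {𝒳 : Type*}

noncomputable def waldRatio (μ lam : ℝ → 𝒳 → ℝ) (x : 𝒳) : ℝ :=
  (μ 1 x - μ 0 x) / (lam 1 x - lam 0 x)

noncomputable def ivScale (ρ : 𝒳 → ℝ) (lam : ℝ → 𝒳 → ℝ) (x : 𝒳) : ℝ :=
  ρ x / (lam 1 x - lam 0 x)

/-- `(2z - 1) / π_z` with `p = π₁`, `π₀ = 1 - π₁`, interpolated linearly in `z`. -/
noncomputable def instrumentWeight (p z : ℝ) : ℝ :=
  (2 * z - 1) / (z * p + (1 - z) * (1 - p))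

/-- `E[M(Y)(1 - A) - μ̄_Z - (A - λ̄_Z) δ̄ | Z = z, X = x]` for the candidate nuisances. -/
noncomputable def candidateResidualMean (μ lam μb lamb : ℝ → 𝒳 → ℝ) (z : ℝ) (x : 𝒳) : ℝ :=
  μ z x - μb z x - (lam z x - lamb z x) * waldRatio μb lamb x

/-- `ḣ(β, O, P)` at the observation `(X, Z, A, M(Y)(1 - A)) = (x, z, a, m)`, with `h = h(β, P)`. -/
noncomputable def efficientInfluence (μ lam : ℝ → 𝒳 → ℝ) (ρ π₁ : 𝒳 → ℝ) (h z a m : ℝ)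
    (x : 𝒳) : ℝ :=
  (waldRatio μ lam x * a - h) + ivScale ρ lam x * instrumentWeight (π₁ x) z
    * (m - (z * μ 1 x + (1 - z) * μ 0 x)
      - (a - (z * lam 1 x + (1 - z) * lam 0 x)) * waldRatio μ lam x)

/-- Four terms of the form `φ(V) (g - E[g | V])` with `V = X` or `V = (Z, X)`. -/
noncomputable def residualSum (μ lam μb lamb : ℝ → 𝒳 → ℝ) (ρ ρb π₁b : 𝒳 → ℝ) (z a m : ℝ)
    (x : 𝒳) : ℝ :=
  waldRatio μ lam x * (a - ρ x)
    + ivScale ρb lamb x * instrumentWeight (π₁b x) z * (m - μ z x)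
    - ivScale ρb lamb x * instrumentWeight (π₁b x) z * waldRatio μb lamb x * (a - lam z x)
    + ivScale ρb lamb x * candidateResidualMean μ lam μb lamb 0 x / (π₁b x * (1 - π₁b x))
      * (z - π₁b x)

theorem Measurable.instrumentWeight {α : Type*} {m : MeasurableSpace α} {p z : α → ℝ}
    (hp : Measurable p) (hz : Measurable z) :
    Measurable fun a => instrumentWeight (p a) (z a) := by
  unfold _root_.instrumentWeight
  fun_prop

theorem instrumentWeight_eq {p z : ℝ} (hz : z = 0 ∨ z = 1) (hp₀ : p ≠ 0) (hp₁ : 1 - p ≠ 0) :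
    instrumentWeight p z = (z - p) / (p * (1 - p)) := by
  unfold instrumentWeight
  rcases hz with rfl | rfl <;> norm_num <;> field_simp

theorem abs_instrumentWeight_le {p z c : ℝ} (hz : z = 0 ∨ z = 1) (hc : 0 < c)
    (hp : c ≤ p ∧ p ≤ 1 - c) : |instrumentWeight p z| ≤ 1 / c := by
  refine abs_div_le_div_of_abs_le ?_ hc ?_ <;>
    rcases hz with rfl | rfl <;> norm_num <;> rw [abs_of_pos] <;> linarith

variable {μ lam μb lamb : ℝ → 𝒳 → ℝ} {ρ ρb π₁b : 𝒳 → ℝ} {x : 𝒳} {C c : ℝ}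

theorem abs_waldRatio_le (hc : 0 < c) (hμ : ∀ z, |μ z x| ≤ C)
    (hlam : c ≤ |lam 1 x - lam 0 x|) : |waldRatio μ lam x| ≤ (C + C) / c :=
  abs_div_le_div_of_abs_le (abs_sub_le_add_of_abs_le (hμ 1) (hμ 0)) hc hlam

theorem abs_ivScale_le (hc : 0 < c) (hρ : |ρ x| ≤ C) (hlam : c ≤ |lam 1 x - lam 0 x|) :
    |ivScale ρ lam x| ≤ C / c :=
  abs_div_le_div_of_abs_le hρ hc hlam

theorem abs_candidateResidualMean_le {z : ℝ} (hc : 0 < c) (hμ : |μ z x| ≤ C)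
    (hlam : |lam z x| ≤ C) (hμb : ∀ z, |μb z x| ≤ C) (hlamb : ∀ z, |lamb z x| ≤ C)
    (hlamb₀ : c ≤ |lamb 1 x - lamb 0 x|) :
    |candidateResidualMean μ lam μb lamb z x| ≤ C + C + (C + C) * ((C + C) / c) :=
  abs_sub_le_add_of_abs_le (abs_sub_le_add_of_abs_le hμ (hμb z))
    (abs_mul_le_mul_of_abs_le (abs_sub_le_add_of_abs_le hlam (hlamb z))
      (abs_waldRatio_le hc hμb hlamb₀))

theorem candidateResidualMean_one_eq_of_waldRatio_eq (hδ : waldRatio μb lamb x = waldRatio μ lam x)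
    (hlam : lam 1 x - lam 0 x ≠ 0) (hlamb : lamb 1 x - lamb 0 x ≠ 0) :
    candidateResidualMean μ lam μb lamb 1 x = candidateResidualMean μ lam μb lamb 0 x := by
  have hμ : μ 1 x - μ 0 x = waldRatio μ lam x * (lam 1 x - lam 0 x) := by
    unfold waldRatio; field_simp
  have hμb : μb 1 x - μb 0 x = waldRatio μ lam x * (lamb 1 x - lamb 0 x) := by
    rw [← hδ]; unfold waldRatio; field_simp
  unfold candidateResidualMean
  rw [hδ]
  linear_combination hμ - hμb

theorem efficientInfluence_eq_add_residualSum {h z a m : ℝ} (hz : z = 0 ∨ z = 1)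
    (hδ : waldRatio μb lamb x = waldRatio μ lam x) (hlam : lam 1 x - lam 0 x ≠ 0)
    (hlamb : lamb 1 x - lamb 0 x ≠ 0) (hπ₀ : π₁b x ≠ 0) (hπ₁ : 1 - π₁b x ≠ 0) :
    efficientInfluence μb lamb ρb π₁b h z a m x
      = waldRatio μ lam x * ρ x - h + residualSum μ lam μb lamb ρ ρb π₁b z a m x := by
  have hmean : candidateResidualMean μ lam μb lamb z x
      = candidateResidualMean μ lam μb lamb 0 x := by
    rcases hz with rfl | rfl
    · rfl
    · exact candidateResidualMean_one_eq_of_waldRatio_eq hδ hlam hlamb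
  have hresidual : m - (z * μb 1 x + (1 - z) * μb 0 x)
      - (a - (z * lamb 1 x + (1 - z) * lamb 0 x)) * waldRatio μb lamb x
      = (m - μ z x) - waldRatio μb lamb x * (a - lam z x)
        + candidateResidualMean μ lam μb lamb 0 x := by
    rw [← hmean]
    unfold candidateResidualMean
    rcases hz with rfl | rfl <;> ring
  unfold efficientInfluence residualSum
  rw [hresidual, instrumentWeight_eq hz hπ₀ hπ₁, hδ]
  ring

theorem measurable_waldRatio [MeasurableSpace 𝒳] (hμ : ∀ z, Measurable (μ z))
    (hlam : ∀ z, Measurable (lam z)) : Measurable (waldRatio μ lam) :=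
  ((hμ 1).sub (hμ 0)).div ((hlam 1).sub (hlam 0))

theorem measurable_ivScale [MeasurableSpace 𝒳] (hρ : Measurable ρ)
    (hlam : ∀ z, Measurable (lam z)) : Measurable (ivScale ρ lam) :=
  hρ.div ((hlam 1).sub (hlam 0))

theorem measurable_candidateResidualMean [MeasurableSpace 𝒳] (hμ : ∀ z, Measurable (μ z))
    (hlam : ∀ z, Measurable (lam z)) (hμb : ∀ z, Measurable (μb z))
    (hlamb : ∀ z, Measurable (lamb z)) (z : ℝ) :
    Measurable (candidateResidualMean μ lam μb lamb z) :=
  ((hμ z).sub (hμb z)).sub (((hlam z).sub (hlamb z)).mul (measurable_waldRatio hμb hlamb))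

end InstrumentalVariables

theorem integrable_residualSum_and_integral_eq_zero {Ω 𝒳 : Type*} [MeasurableSpace Ω]
    [MeasurableSpace 𝒳] {P : Measure Ω} [IsFiniteMeasure P] {X : Ω → 𝒳} {Z A Mo : Ω → ℝ}
    {μ lam μb lamb : ℝ → 𝒳 → ℝ} {ρ ρb π₁b : 𝒳 → ℝ} {C c : ℝ}
    (hX : Measurable X) (hZ : Measurable Z) (hZ01 : ∀ ω, Z ω = 0 ∨ Z ω = 1)
    (hA : Integrable A P) (hMo : Integrable Mo P)
    (hμm : ∀ z, Measurable (μ z)) (hlamm : ∀ z, Measurable (lam z))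
    (hμbm : ∀ z, Measurable (μb z)) (hlambm : ∀ z, Measurable (lamb z))
    (hρbm : Measurable ρb) (hπbm : Measurable π₁b)
    (hc : 0 < c) (hπb : ∀ x, c ≤ π₁b x ∧ π₁b x ≤ 1 - c)
    (hδA : ∀ x, c ≤ |lam 1 x - lam 0 x|) (hδAb : ∀ x, c ≤ |lamb 1 x - lamb 0 x|)
    (hμC : ∀ z x, |μ z x| ≤ C) (hlamC : ∀ z x, |lam z x| ≤ C) (hμbC : ∀ z x, |μb z x| ≤ C)
    (hlambC : ∀ z x, |lamb z x| ≤ C) (hρbC : ∀ x, |ρb x| ≤ C)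
    (hρ : P[A | MeasurableSpace.comap X inferInstance] =ᵐ[P] fun ω => ρ (X ω))
    (hμ : P[Mo | MeasurableSpace.comap (fun ω => (Z ω, X ω)) inferInstance]
      =ᵐ[P] fun ω => μ (Z ω) (X ω))
    (hlam : P[A | MeasurableSpace.comap (fun ω => (Z ω, X ω)) inferInstance]
      =ᵐ[P] fun ω => lam (Z ω) (X ω))
    (hπ : P[Z | MeasurableSpace.comap X inferInstance] =ᵐ[P] fun ω => π₁b (X ω)) :
    Integrable (fun ω => residualSum μ lam μb lamb ρ ρb π₁b (Z ω) (A ω) (Mo ω) (X ω)) P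
      ∧ ∫ ω, residualSum μ lam μb lamb ρ ρb π₁b (Z ω) (A ω) (Mo ω) (X ω) ∂P = 0 := by
  have hX' : Measurable[MeasurableSpace.comap X inferInstance] X := comap_measurable X
  have hZX' : Measurable[MeasurableSpace.comap (fun ω => (Z ω, X ω)) inferInstance]
      fun ω => (Z ω, X ω) := comap_measurable _
  have hXZX : Measurable[MeasurableSpace.comap (fun ω => (Z ω, X ω)) inferInstance] X :=
    measurable_snd.comp hZX'
  have hZZX : Measurable[MeasurableSpace.comap (fun ω => (Z ω, X ω)) inferInstance] Z :=
    measurable_fst.comp hZX'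
  have hweight := ((measurable_ivScale hρbm hlambm).fun_comp hXZX).fun_mul
    ((hπbm.fun_comp hXZX).instrumentWeight hZZX)
  have hweightC : ∀ ω, |ivScale ρb lamb (X ω) * instrumentWeight (π₁b (X ω)) (Z ω)|
      ≤ C / c * (1 / c) := fun ω =>
    abs_mul_le_mul_of_abs_le (abs_ivScale_le hc (hρbC _) (hδAb _))
      (abs_instrumentWeight_le (hZ01 ω) hc (hπb _))
  obtain ⟨i₁, z₁⟩ := integrable_mul_sub_condExp_and_integral_eq_zero hX.comap_le
    ((measurable_waldRatio hμm hlamm).fun_comp hX').stronglyMeasurable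
    ⟨_, fun ω => abs_waldRatio_le hc (hμC · _) (hδA (X ω))⟩ hA hρ
  obtain ⟨i₂, z₂⟩ := integrable_mul_sub_condExp_and_integral_eq_zero (hZ.prodMk hX).comap_le
    hweight.stronglyMeasurable ⟨_, hweightC⟩ hMo hμ
  obtain ⟨i₃, z₃⟩ := integrable_mul_sub_condExp_and_integral_eq_zero (hZ.prodMk hX).comap_le
    (hweight.fun_mul ((measurable_waldRatio hμbm hlambm).fun_comp hXZX)).stronglyMeasurable
    ⟨_, fun ω => abs_mul_le_mul_of_abs_le (hweightC ω)
      (abs_waldRatio_le hc (hμbC · _) (hδAb _))⟩ hA hlam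
  have hpropensity := (((measurable_ivScale hρbm hlambm).fun_comp hX').fun_mul
      ((measurable_candidateResidualMean hμm hlamm hμbm hlambm 0).fun_comp hX')).fun_div
    ((hπbm.fun_comp hX').fun_mul ((measurable_const (a := 1)).fun_sub (hπbm.fun_comp hX')))
  obtain ⟨i₄, z₄⟩ := integrable_mul_sub_condExp_and_integral_eq_zero hX.comap_le
    hpropensity.stronglyMeasurable
    ⟨_, fun ω => abs_div_le_div_of_abs_le
      (abs_mul_le_mul_of_abs_le (abs_ivScale_le hc (hρbC _) (hδAb _))
        (abs_candidateResidualMean_le hc (hμC 0 _) (hlamC 0 _) (hμbC · _) (hlambC · _)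
          (hδAb _)))
      (mul_pos hc hc) (mul_self_le_abs_mul_one_sub hc (hπb (X ω)))⟩
    (integrable_of_eq_zero_or_eq_one hZ hZ01) hπ
  refine ⟨((i₁.fun_add i₂).sub' i₃).fun_add i₄, ?_⟩
  unfold residualSum
  rw [integral_add ((i₁.fun_add i₂).sub' i₃) i₄, integral_sub (i₁.fun_add i₂) i₃,
    integral_add i₁ i₂, z₁, z₂, z₃, z₄]
  norm_num

theorem stmt5_general
    {Ω 𝒳 : Type*} [MeasurableSpace Ω] [MeasurableSpace 𝒳]
    (P : Measure Ω) [IsProbabilityMeasure P]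
    (X : Ω → 𝒳) (Z A Y : Ω → ℝ)
    (hX : Measurable X) (hZ : Measurable Z) (hA : Measurable A) (hY : Measurable Y)
    (hZ01 : ∀ ω, Z ω = 0 ∨ Z ω = 1) (hA01 : ∀ ω, A ω = 0 ∨ A ω = 1)
    (M : ℝ → ℝ) (hMmeas : Measurable M) (hMbdd : ∃ C, ∀ y, |M y| ≤ C)
    -- true nuisance functions (versions of the conditional expectations)
    (π₁ ρ : 𝒳 → ℝ) (μ lam : ℝ → 𝒳 → ℝ)
    (hμmeas : ∀ z, Measurable (μ z)) (hlammeas : ∀ z, Measurable (lam z))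
    (hπ : P[Z | MeasurableSpace.comap X inferInstance] =ᵐ[P] fun ω => π₁ (X ω))
    (hρ : P[A | MeasurableSpace.comap X inferInstance] =ᵐ[P] fun ω => ρ (X ω))
    (hμ : P[(fun ω => M (Y ω) * (1 - A ω)) |
        MeasurableSpace.comap (fun ω => (Z ω, X ω)) inferInstance]
      =ᵐ[P] fun ω => μ (Z ω) (X ω))
    (hlam : P[A | MeasurableSpace.comap (fun ω => (Z ω, X ω)) inferInstance]
      =ᵐ[P] fun ω => lam (Z ω) (X ω))
    -- candidate (possibly misspecified) nuisance functions
    (π₁b ρb : 𝒳 → ℝ) (μb lamb : ℝ → 𝒳 → ℝ)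
    (hπbmeas : Measurable π₁b) (hρbmeas : Measurable ρb)
    (hμbmeas : ∀ z, Measurable (μb z)) (hlambmeas : ∀ z, Measurable (lamb z))
    -- regularity: denominators bounded away from zero, nuisances bounded
    (c : ℝ) (hc : 0 < c)
    (hπbbd : ∀ x, c ≤ π₁b x ∧ π₁b x ≤ 1 - c)
    (hδA : ∀ x, c ≤ |lam 1 x - lam 0 x|) (hδAb : ∀ x, c ≤ |lamb 1 x - lamb 0 x|)
    (hnuisbd : ∃ C, ∀ z x, |μ z x| ≤ C ∧ |lam z x| ≤ C ∧ |ρ x| ≤ C ∧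
      |μb z x| ≤ C ∧ |lamb z x| ≤ C ∧ |ρb x| ≤ C)
    -- the number `h(β,P̄)` computed under the candidate distribution
    (hPbar : ℝ)
    -- correct specification of δ and π₁
    (hδcorrect : ∀ᵐ ω ∂P,
      (μb 1 (X ω) - μb 0 (X ω)) / (lamb 1 (X ω) - lamb 0 (X ω))
        = (μ 1 (X ω) - μ 0 (X ω)) / (lam 1 (X ω) - lam 0 (X ω)))
    (hπcorrect : ∀ᵐ ω ∂P, π₁b (X ω) = π₁ (X ω)) :
    hPbar
      - (∫ ω, ((μ 1 (X ω) - μ 0 (X ω)) / (lam 1 (X ω) - lam 0 (X ω))) * ρ (X ω) ∂P)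
      + (∫ ω,
          (((μb 1 (X ω) - μb 0 (X ω)) / (lamb 1 (X ω) - lamb 0 (X ω))) * A ω - hPbar)
            + (ρb (X ω) / (lamb 1 (X ω) - lamb 0 (X ω)))
                * ((2 * Z ω - 1) / (Z ω * π₁b (X ω) + (1 - Z ω) * (1 - π₁b (X ω))))
                * (M (Y ω) * (1 - A ω)
                    - (Z ω * μb 1 (X ω) + (1 - Z ω) * μb 0 (X ω))
                    - (A ω - (Z ω * lamb 1 (X ω) + (1 - Z ω) * lamb 0 (X ω)))
                        * ((μb 1 (X ω) - μb 0 (X ω)) / (lamb 1 (X ω) - lamb 0 (X ω)))) ∂P)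
      = 0 := by
  obtain ⟨CM, hCM⟩ := hMbdd
  obtain ⟨C, hC⟩ := hnuisbd
  have hAint : Integrable A P := integrable_of_eq_zero_or_eq_one hA hA01
  have hMint : Integrable (fun ω => M (Y ω) * (1 - A ω)) P :=
    ((integrable_const 1).sub hAint).bdd_mul (hMmeas.comp hY).aestronglyMeasurable
      (.of_forall fun ω => hCM (Y ω))
  obtain ⟨hSint, hS⟩ := integrable_residualSum_and_integral_eq_zero hX hZ hZ01 hAint
    hMint hμmeas hlammeas hμbmeas hlambmeas hρbmeas hπbmeas hc hπbbd hδA hδAb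
    (fun z x => (hC z x).1) (fun z x => (hC z x).2.1) (fun z x => (hC z x).2.2.2.1)
    (fun z x => (hC z x).2.2.2.2.1) (fun x => (hC 0 x).2.2.2.2.2) hρ hμ hlam
    (hπ.trans (hπcorrect.mono fun ω h => h.symm))
  have hδρ : Integrable (fun ω => waldRatio μ lam (X ω) * ρ (X ω)) P :=
    (integrable_condExp.congr hρ).bdd_mul
      ((measurable_waldRatio hμmeas hlammeas).comp hX).aestronglyMeasurable
      (.of_forall fun ω => abs_waldRatio_le hc (fun z => (hC z _).1) (hδA _))
  calc _ = hPbar - ∫ ω, waldRatio μ lam (X ω) * ρ (X ω) ∂P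
        + ∫ ω, (waldRatio μ lam (X ω) * ρ (X ω) - hPbar
          + residualSum μ lam μb lamb ρ ρb π₁b (Z ω) (A ω) (M (Y ω) * (1 - A ω)) (X ω)) ∂P := by
        congr 1
        refine integral_congr_ae ?_
        filter_upwards [hδcorrect] with ω hδω
        exact efficientInfluence_eq_add_residualSum (hZ01 ω) hδω
          (abs_pos.mp (hc.trans_le (hδA _))) (abs_pos.mp (hc.trans_le (hδAb _)))
          (hc.trans_le (hπbbd _).1).ne' (by linarith [hπbbd (X ω)])
    _ = 0 := by
        rw [integral_add (hδρ.sub' (integrable_const _)) hSint,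
          integral_sub hδρ (integrable_const _), hS, integral_const]
        simp

/-- The influence function is exactly unbiased for `h(β,P)` when the nuisance
pair `(δ, π₁)` is correctly specified: if `δ̄ = δ` and `π̄₁ = π₁`, while `ρ̄, λ̄₀, λ̄₁, μ̄₀, μ̄₁`
are arbitrary, then the second-order remainder
`R(P̄,P) = h(β,P̄) − h(β,P) + E_P[ḣ(β,O,P̄)]` equals zero. -/
theorem stmt5
    {Ω 𝒳 : Type*} [MeasurableSpace Ω] [MeasurableSpace 𝒳]
    (P : Measure Ω) [IsProbabilityMeasure P]
    (X : Ω → 𝒳) (Z A Y : Ω → ℝ)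
    (hX : Measurable X) (hZ : Measurable Z) (hA : Measurable A) (hY : Measurable Y)
    (hZ01 : ∀ ω, Z ω = 0 ∨ Z ω = 1) (hA01 : ∀ ω, A ω = 0 ∨ A ω = 1)
    (M : ℝ → ℝ) (hMmeas : Measurable M) (hMbdd : ∃ C, ∀ y, |M y| ≤ C)
    -- true nuisance functions (versions of the conditional expectations)
    (π₁ ρ : 𝒳 → ℝ) (μ lam : ℝ → 𝒳 → ℝ)
    (hπmeas : Measurable π₁) (hρmeas : Measurable ρ)
    (hμmeas : ∀ z, Measurable (μ z)) (hlammeas : ∀ z, Measurable (lam z))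
    (hπ : P[Z | MeasurableSpace.comap X inferInstance] =ᵐ[P] fun ω => π₁ (X ω))
    (hρ : P[A | MeasurableSpace.comap X inferInstance] =ᵐ[P] fun ω => ρ (X ω))
    (hμ : P[(fun ω => M (Y ω) * (1 - A ω)) |
        MeasurableSpace.comap (fun ω => (Z ω, X ω)) inferInstance]
      =ᵐ[P] fun ω => μ (Z ω) (X ω))
    (hlam : P[A | MeasurableSpace.comap (fun ω => (Z ω, X ω)) inferInstance]
      =ᵐ[P] fun ω => lam (Z ω) (X ω))
    -- candidate (possibly misspecified) nuisance functions
    (π₁b ρb : 𝒳 → ℝ) (μb lamb : ℝ → 𝒳 → ℝ)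
    (hπbmeas : Measurable π₁b) (hρbmeas : Measurable ρb)
    (hμbmeas : ∀ z, Measurable (μb z)) (hlambmeas : ∀ z, Measurable (lamb z))
    -- regularity: denominators bounded away from zero, nuisances bounded
    (c : ℝ) (hc : 0 < c)
    (hπbd : ∀ x, c ≤ π₁ x ∧ π₁ x ≤ 1 - c) (hπbbd : ∀ x, c ≤ π₁b x ∧ π₁b x ≤ 1 - c)
    (hδA : ∀ x, c ≤ |lam 1 x - lam 0 x|) (hδAb : ∀ x, c ≤ |lamb 1 x - lamb 0 x|)
    (hnuisbd : ∃ C, ∀ z x, |μ z x| ≤ C ∧ |lam z x| ≤ C ∧ |ρ x| ≤ C ∧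
      |μb z x| ≤ C ∧ |lamb z x| ≤ C ∧ |ρb x| ≤ C)
    -- the number `h(β,P̄)` computed under the candidate distribution
    (hPbar : ℝ)
    -- correct specification of δ and π₁
    (hδcorrect : ∀ᵐ ω ∂P,
      (μb 1 (X ω) - μb 0 (X ω)) / (lamb 1 (X ω) - lamb 0 (X ω))
        = (μ 1 (X ω) - μ 0 (X ω)) / (lam 1 (X ω) - lam 0 (X ω)))
    (hπcorrect : ∀ᵐ ω ∂P, π₁b (X ω) = π₁ (X ω)) :
    hPbar
      - (∫ ω, ((μ 1 (X ω) - μ 0 (X ω)) / (lam 1 (X ω) - lam 0 (X ω))) * ρ (X ω) ∂P)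
      + (∫ ω,
          (((μb 1 (X ω) - μb 0 (X ω)) / (lamb 1 (X ω) - lamb 0 (X ω))) * A ω - hPbar)
            + (ρb (X ω) / (lamb 1 (X ω) - lamb 0 (X ω)))
                * ((2 * Z ω - 1) / (Z ω * π₁b (X ω) + (1 - Z ω) * (1 - π₁b (X ω))))
                * (M (Y ω) * (1 - A ω)
                    - (Z ω * μb 1 (X ω) + (1 - Z ω) * μb 0 (X ω))
                    - (A ω - (Z ω * lamb 1 (X ω) + (1 - Z ω) * lamb 0 (X ω)))
                        * ((μb 1 (X ω) - μb 0 (X ω)) / (lamb 1 (X ω) - lamb 0 (X ω)))) ∂P)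
      = 0 :=
  stmt5_general P X Z A Y hX hZ hA hY hZ01 hA01 M hMmeas hMbdd π₁ ρ μ lam hμmeas hlammeas hπ hρ hμ
    hlam π₁b ρb μb lamb hπbmeas hρbmeas hμbmeas hlambmeas c hc hπbbd hδA hδAb hnuisbd hPbar
    hδcorrect hπcorrect
end

section
/- The influence function is exactly unbiased when (δ, λ₀, μ₀) are correctly specified: if δ̄ = δ, λ̄₀ = λ₀, and μ̄₀ = μ₀ (with ρ̄, π̄₁, μ̄₁, λ̄₁ arbitrary), then the remainder R(P̄,P) = 0. The key algebraic identity is (μ̄₁−μ₁) − δ̄(λ̄₁−λ₁) = (μ̄₀−μ₀) + (δ̄−δ)(λ₁−λ̄₀) + δ(λ₀−λ̄₀). -/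
open MeasureTheory

/-! Under correct specification of `(δ, λ₀, μ₀)` the first product of the remainder has the factor
`δ̄ − δ = 0`, and the key identity shows that both numerators of the second product vanish too, so
the remainder integrand is zero almost everywhere. -/

theorem residual_eq_of_mul_eq {R : Type*} [CommRing R] {δ δb l0 l1 m0 m1 l0b l1b m0b m1b : R}
    (h : δ * (l1 - l0) = m1 - m0) (hb : δb * (l1b - l0b) = m1b - m0b) :
    (m1b - m1) - δb * (l1b - l1) = (m0b - m0) + (δb - δ) * (l1 - l0b) + δ * (l0 - l0b) := by
  linear_combination h - hb

theorem remainder_integrand_eq_zero {K : Type*} [Field K]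
    {δ ρ π l0 l1 m0 m1 ρb πb l1b m1b : K}
    (hres : (m1b - m1) - δ * (l1b - l1) = (m0 - m0) + (δ - δ) * (l1 - l0) + δ * (l0 - l0)) :
    (δ - δ) * ((ρb / (l1b - l0)) * ((l1b - l0) - (l1 - l0)) - (ρb - ρ))
      + (ρb / (l1b - l0)) * (πb - π)
        * (((m1b - m1) - δ * (l1b - l1)) / πb + ((m0 - m0) - δ * (l0 - l0)) / (1 - πb)) = 0 := by
  simp only [sub_self, zero_mul, mul_zero, add_zero] at hres
  simp [hres]

theorem stmt7_general
    {𝒳 : Type*} [MeasurableSpace 𝒳] (ν : Measure 𝒳)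
    -- true and candidate nuisance functions
    (ρ π₁ lam0 lam1 μ0 μ1 ρb π₁b lam0b lam1b μ0b μ1b : 𝒳 → ℝ)
    -- all denominators nonzero
    (hden : ∀ x, lam1 x - lam0 x ≠ 0 ∧ lam1b x - lam0b x ≠ 0 ∧ π₁b x ≠ 0 ∧ 1 - π₁b x ≠ 0)
    -- δ and δ̄
    (δ δb : 𝒳 → ℝ)
    (hδ : ∀ x, δ x = (μ1 x - μ0 x) / (lam1 x - lam0 x))
    (hδb : ∀ x, δb x = (μ1b x - μ0b x) / (lam1b x - lam0b x))
    -- correct specification of δ, λ₀ and μ₀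
    (hδeq : ∀ᵐ x ∂ν, δb x = δ x)
    (hlam0eq : ∀ᵐ x ∂ν, lam0b x = lam0 x)
    (hμ0eq : ∀ᵐ x ∂ν, μ0b x = μ0 x) :
    (∀ᵐ x ∂ν, (μ1b x - μ1 x) - δb x * (lam1b x - lam1 x)
        = (μ0b x - μ0 x) + (δb x - δ x) * (lam1 x - lam0b x) + δ x * (lam0 x - lam0b x)) ∧
    ∫ x,
      ((δb x - δ x) * ((ρb x / (lam1b x - lam0b x))
            * ((lam1b x - lam0b x) - (lam1 x - lam0 x)) - (ρb x - ρ x))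
        + (ρb x / (lam1b x - lam0b x)) * (π₁b x - π₁ x)
            * (((μ1b x - μ1 x) - δb x * (lam1b x - lam1 x)) / π₁b x
              + ((μ0b x - μ0 x) - δb x * (lam0b x - lam0 x)) / (1 - π₁b x))) ∂ν = 0 := by
  have hres : ∀ x, (μ1b x - μ1 x) - δb x * (lam1b x - lam1 x)
      = (μ0b x - μ0 x) + (δb x - δ x) * (lam1 x - lam0b x) + δ x * (lam0 x - lam0b x) :=
    fun x => residual_eq_of_mul_eq ((eq_div_iff (hden x).1).1 (hδ x))
      ((eq_div_iff (hden x).2.1).1 (hδb x))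
  refine ⟨.of_forall hres, integral_eq_zero_of_ae ?_⟩
  filter_upwards [hδeq, hlam0eq, hμ0eq] with x hδx hlam0x hμ0x
  have hresx := hres x
  rw [hδx, hlam0x, hμ0x] at hresx ⊢
  exact remainder_integrand_eq_zero hresx

/-- The influence function is exactly unbiased when `(δ, λ₀, μ₀)` are correctly
specified: if `δ̄ = δ`, `λ̄₀ = λ₀` and `μ̄₀ = μ₀` (with `ρ̄, π̄₁, μ̄₁, λ̄₁` arbitrary), then the
remainder `R(P̄,P) = 0`.  The key algebraic identity is
`(μ̄₁−μ₁) − δ̄(λ̄₁−λ₁) = (μ̄₀−μ₀) + (δ̄−δ)(λ₁−λ̄₀) + δ(λ₀−λ̄₀)`. -/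
theorem stmt7
    {𝒳 : Type*} [MeasurableSpace 𝒳] (ν : Measure 𝒳) [IsProbabilityMeasure ν]
    -- true and candidate nuisance functions
    (ρ π₁ lam0 lam1 μ0 μ1 ρb π₁b lam0b lam1b μ0b μ1b : 𝒳 → ℝ)
    (hmeas : ∀ g ∈ [ρ, π₁, lam0, lam1, μ0, μ1, ρb, π₁b, lam0b, lam1b, μ0b, μ1b], Measurable g)
    -- all denominators nonzero
    (hden : ∀ x, lam1 x - lam0 x ≠ 0 ∧ lam1b x - lam0b x ≠ 0 ∧ π₁b x ≠ 0 ∧ 1 - π₁b x ≠ 0)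
    -- δ and δ̄
    (δ δb : 𝒳 → ℝ)
    (hδ : ∀ x, δ x = (μ1 x - μ0 x) / (lam1 x - lam0 x))
    (hδb : ∀ x, δb x = (μ1b x - μ0b x) / (lam1b x - lam0b x))
    -- integrability of the remainder integrand
    (hint : Integrable (fun x =>
      (δb x - δ x) * ((ρb x / (lam1b x - lam0b x))
            * ((lam1b x - lam0b x) - (lam1 x - lam0 x)) - (ρb x - ρ x))
        + (ρb x / (lam1b x - lam0b x)) * (π₁b x - π₁ x)
            * (((μ1b x - μ1 x) - δb x * (lam1b x - lam1 x)) / π₁b x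
              + ((μ0b x - μ0 x) - δb x * (lam0b x - lam0 x)) / (1 - π₁b x))) ν)
    -- correct specification of δ, λ₀ and μ₀
    (hδeq : ∀ᵐ x ∂ν, δb x = δ x)
    (hlam0eq : ∀ᵐ x ∂ν, lam0b x = lam0 x)
    (hμ0eq : ∀ᵐ x ∂ν, μ0b x = μ0 x) :
    (∀ᵐ x ∂ν, (μ1b x - μ1 x) - δb x * (lam1b x - lam1 x)
        = (μ0b x - μ0 x) + (δb x - δ x) * (lam1 x - lam0b x) + δ x * (lam0 x - lam0b x)) ∧
    ∫ x,
      ((δb x - δ x) * ((ρb x / (lam1b x - lam0b x))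
            * ((lam1b x - lam0b x) - (lam1 x - lam0 x)) - (ρb x - ρ x))
        + (ρb x / (lam1b x - lam0b x)) * (π₁b x - π₁ x)
            * (((μ1b x - μ1 x) - δb x * (lam1b x - lam1 x)) / π₁b x
              + ((μ0b x - μ0 x) - δb x * (lam0b x - lam0 x)) / (1 - π₁b x))) ∂ν = 0 :=
  stmt7_general ν ρ π₁ lam0 lam1 μ0 μ1 ρb π₁b lam0b lam1b μ0b μ1b hden δ δb hδ hδb hδeq hlam0eq
    hμ0eq
end

section
/- The efficient influence function has mean zero under the true distribution: E_P[ḣ(β,O,P)] = 0, where ḣ(β,O,P) = (δ(β,X)·A − h(β,P)) + (ρ(X)/δ^A(X))·((2Z−1)/π_Z(X))·(M(Y,β)(1−A) − μ_Z(β,X) − (A−λ_Z(X))·δ(β,X)) and h(β,P) = E_P[δ(β,X)·ρ(X)]. -/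
/-!
Write `δ = (μ₁ - μ₀)/(λ₁ - λ₀)` and `W(Z, X) = ρ(X)/δ^A(X) · (2Z - 1)/π_Z(X)`.
The influence function splits as
`δ(X)(A - ρ(X)) + (δ(X)ρ(X) - h) + W(Z, X)(M(Y)(1 - A) - μ_Z(X)) - W(Z, X)δ(X)(A - λ_Z(X))`.
The second term is centred by the definition of `h`; each of the others is a bounded function
of the conditioning variables times a residual `f - E[f | ·]`, hence has mean zero by the tower
property.
-/

open MeasureTheory

section Residual

variable {Ω β : Type*} {m0 : MeasurableSpace Ω} {μ : Measure Ω} {f g : Ω → ℝ} {C : ℝ}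

theorem integral_mul_sub_eq_zero_of_condExp_ae_eq {m : MeasurableSpace Ω}
    (hm : m ≤ m0) [SigmaFinite (μ.trim hm)] {w : Ω → ℝ} (hw : StronglyMeasurable[m] w)
    (hwb : ∀ᵐ ω ∂μ, ‖w ω‖ ≤ C) (hf : Integrable f μ) (hg : μ[f | m] =ᵐ[μ] g) :
    ∫ ω, w ω * (f ω - g ω) ∂μ = 0 := by
  have hw' : AEStronglyMeasurable[m0] w μ := (hw.mono hm).aestronglyMeasurable
  have hwf : Integrable (fun ω => w ω * f ω) μ := hf.bdd_mul hw' hwb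
  have hwg : Integrable (fun ω => w ω * g ω) μ :=
    (integrable_condExp.congr hg).bdd_mul hw' hwb
  have tower : ∫ ω, w ω * f ω ∂μ = ∫ ω, w ω * g ω ∂μ := by
    rw [← integral_condExp hm (f := fun ω => w ω * f ω)]
    refine integral_congr_ae ((condExp_mul_of_stronglyMeasurable_left hw hwf hf).trans ?_)
    filter_upwards [hg] with ω hω
    simp only [Pi.mul_apply, hω]
  simp_rw [mul_sub]
  rw [integral_sub hwf hwg, tower, sub_self]

variable [MeasurableSpace β] {V : Ω → β} {W : β → ℝ}

theorem integrable_and_integral_comp_mul_sub_eq_zero [IsFiniteMeasure μ]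
    (hV : Measurable V) (hW : Measurable W) (hWb : ∀ᵐ ω ∂μ, ‖W (V ω)‖ ≤ C)
    (hf : Integrable f μ) (hg : μ[f | MeasurableSpace.comap V inferInstance] =ᵐ[μ] g) :
    Integrable (fun ω => W (V ω) * (f ω - g ω)) μ ∧
      ∫ ω, W (V ω) * (f ω - g ω) ∂μ = 0 :=
  ⟨(hf.sub (integrable_condExp.congr hg)).bdd_mul (hW.comp hV).aestronglyMeasurable hWb,
    integral_mul_sub_eq_zero_of_condExp_ae_eq hV.comap_le
      (hW.comp (comap_measurable V)).stronglyMeasurable hWb hf hg⟩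

theorem integrable_and_integral_comp_mul_sub_integral_eq_zero
    [IsProbabilityMeasure μ] (hV : Measurable V) (hW : Measurable W)
    (hWb : ∀ᵐ ω ∂μ, ‖W (V ω)‖ ≤ C) (hf : Integrable f μ)
    (hg : μ[f | MeasurableSpace.comap V inferInstance] =ᵐ[μ] g) :
    Integrable (fun ω => W (V ω) * f ω - ∫ ω', W (V ω') * g ω' ∂μ) μ ∧
      ∫ ω, (W (V ω) * f ω - ∫ ω', W (V ω') * g ω' ∂μ) ∂μ = 0 := by
  obtain ⟨hres, hres_zero⟩ :=
    integrable_and_integral_comp_mul_sub_eq_zero hV hW hWb hf hg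
  have hWg : Integrable (fun ω => W (V ω) * g ω - ∫ ω', W (V ω') * g ω' ∂μ) μ :=
    ((integrable_condExp.congr hg).bdd_mul (hW.comp hV).aestronglyMeasurable hWb).sub
      (integrable_const _)
  have hsplit : (fun ω => W (V ω) * f ω - ∫ ω', W (V ω') * g ω' ∂μ) =
      fun ω => W (V ω) * (f ω - g ω)
        + (W (V ω) * g ω - ∫ ω', W (V ω') * g ω' ∂μ) := by
    funext ω
    ring
  refine ⟨hsplit ▸ hres.add hWg, ?_⟩
  rw [hsplit, integral_add hres hWg, hres_zero, zero_add]
  simpa [ProbabilityTheory.centralMoment] using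
    ProbabilityTheory.centralMoment_one (X := fun ω => W (V ω) * g ω) (μ := μ)

end Residual

theorem mul_apply_one_add_one_sub_mul_apply_zero {z : ℝ} (hz : z = 0 ∨ z = 1)
    (φ : ℝ → ℝ) : z * φ 1 + (1 - z) * φ 0 = φ z := by
  rcases hz with rfl | rfl <;> simp

theorem abs_div_le_div_of_le {a b C c : ℝ} (ha : |a| ≤ C) (hb : c ≤ |b|) (hc : 0 < c) :
    |a / b| ≤ C / c := by
  rw [abs_div]
  exact div_le_div₀ ((abs_nonneg a).trans ha) ha hc hb

theorem abs_two_mul_sub_one_div_le {z p c : ℝ} (hz : z = 0 ∨ z = 1)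
    (hp : c ≤ p ∧ p ≤ 1 - c) (hc : 0 < c) :
    |(2 * z - 1) / (z * p + (1 - z) * (1 - p))| ≤ 1 / c := by
  rcases hz with rfl | rfl <;>
    exact abs_div_le_div_of_le (by norm_num) (by rw [abs_of_nonneg] <;> linarith) hc

theorem stmt9_general
    {Ω 𝒳 : Type*} [MeasurableSpace Ω] [MeasurableSpace 𝒳]
    (P : Measure Ω) [IsProbabilityMeasure P]
    (X : Ω → 𝒳) (Z A Y : Ω → ℝ)
    (hX : Measurable X) (hZ : Measurable Z) (hA : Measurable A) (hY : Measurable Y)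
    (hZ01 : ∀ ω, Z ω = 0 ∨ Z ω = 1) (hA01 : ∀ ω, A ω = 0 ∨ A ω = 1)
    -- bounded measurable moment function (β fixed)
    (M : ℝ → ℝ) (hMmeas : Measurable M) (hMbdd : ∃ C, ∀ y, |M y| ≤ C)
    -- true nuisance functions (versions of the conditional expectations)
    (π₁ ρ : 𝒳 → ℝ) (μ lam : ℝ → 𝒳 → ℝ)
    (hπmeas : Measurable π₁) (hρmeas : Measurable ρ)
    (hμmeas : ∀ z, Measurable (μ z)) (hlammeas : ∀ z, Measurable (lam z))
    (hρ : P[A | MeasurableSpace.comap X inferInstance] =ᵐ[P] fun ω => ρ (X ω))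
    (hμ : P[(fun ω => M (Y ω) * (1 - A ω)) |
        MeasurableSpace.comap (fun ω => (Z ω, X ω)) inferInstance]
      =ᵐ[P] fun ω => μ (Z ω) (X ω))
    (hlam : P[A | MeasurableSpace.comap (fun ω => (Z ω, X ω)) inferInstance]
      =ᵐ[P] fun ω => lam (Z ω) (X ω))
    -- regularity: π₁ ∈ (c, 1−c) and δ^A nonzero (bounded away from 0)
    (c : ℝ) (hc : 0 < c)
    (hπbd : ∀ x, c ≤ π₁ x ∧ π₁ x ≤ 1 - c)
    (hδA : ∀ x, c ≤ |lam 1 x - lam 0 x|)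
    (hnuisbd : ∃ C, ∀ z x, |μ z x| ≤ C ∧ |lam z x| ≤ C ∧ |ρ x| ≤ C) :
    ∫ ω,
      (((μ 1 (X ω) - μ 0 (X ω)) / (lam 1 (X ω) - lam 0 (X ω))) * A ω
          - ∫ ω', ((μ 1 (X ω') - μ 0 (X ω')) / (lam 1 (X ω') - lam 0 (X ω'))) * ρ (X ω') ∂P)
        + (ρ (X ω) / (lam 1 (X ω) - lam 0 (X ω)))
            * ((2 * Z ω - 1) / (Z ω * π₁ (X ω) + (1 - Z ω) * (1 - π₁ (X ω))))
            * (M (Y ω) * (1 - A ω)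
                - (Z ω * μ 1 (X ω) + (1 - Z ω) * μ 0 (X ω))
                - (A ω - (Z ω * lam 1 (X ω) + (1 - Z ω) * lam 0 (X ω)))
                    * ((μ 1 (X ω) - μ 0 (X ω)) / (lam 1 (X ω) - lam 0 (X ω)))) ∂P
      = 0 := by
  obtain ⟨C, hC⟩ := hnuisbd
  obtain ⟨CM, hCM⟩ := hMbdd
  set δ : 𝒳 → ℝ := fun x => (μ 1 x - μ 0 x) / (lam 1 x - lam 0 x)
  set W : ℝ × 𝒳 → ℝ := fun p => ρ p.2 / (lam 1 p.2 - lam 0 p.2)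
    * ((2 * p.1 - 1) / (p.1 * π₁ p.2 + (1 - p.1) * (1 - π₁ p.2)))
  have hμ₀ := hμmeas 0; have hμ₁ := hμmeas 1
  have hlam₀ := hlammeas 0; have hlam₁ := hlammeas 1
  have hδ_bdd (x : 𝒳) : ‖δ x‖ ≤ 2 * C / c :=
    abs_div_le_div_of_le ((abs_sub _ _).trans (by linarith [(hC 1 x).1, (hC 0 x).1]))
      (hδA x) hc
  have hW_bdd (ω : Ω) : ‖W (Z ω, X ω)‖ ≤ C / c * (1 / c) :=
    norm_mul_le_of_le (abs_div_le_div_of_le (hC 0 (X ω)).2.2 (hδA (X ω)) hc)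
      (abs_two_mul_sub_one_div_le (hZ01 ω) (hπbd (X ω)) hc)
  have hA_int : Integrable A P := Integrable.of_bound hA.aestronglyMeasurable 1
    (ae_of_all _ fun ω => by rcases hA01 ω with h | h <;> simp [h])
  have hF_int : Integrable (fun ω => M (Y ω) * (1 - A ω)) P :=
    ((integrable_const 1).sub hA_int).bdd_mul (hMmeas.comp hY).aestronglyMeasurable
      (ae_of_all _ fun ω => hCM (Y ω))
  have hμZ := hμ.trans (ae_of_all _ fun ω =>
    (mul_apply_one_add_one_sub_mul_apply_zero (hZ01 ω) (μ · (X ω))).symm)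
  have hlamZ := hlam.trans (ae_of_all _ fun ω =>
    (mul_apply_one_add_one_sub_mul_apply_zero (hZ01 ω) (lam · (X ω))).symm)
  obtain ⟨hT₁, hT₁_zero⟩ := integrable_and_integral_comp_mul_sub_integral_eq_zero
    hX (by fun_prop) (ae_of_all _ fun ω => hδ_bdd (X ω)) hA_int hρ
  obtain ⟨hT₂, hT₂_zero⟩ := integrable_and_integral_comp_mul_sub_eq_zero
    (hZ.prodMk hX) (by fun_prop) (ae_of_all _ hW_bdd) hF_int hμZ
  obtain ⟨hT₃, hT₃_zero⟩ := integrable_and_integral_comp_mul_sub_eq_zero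
    (W := fun p => W p * δ p.2) (hZ.prodMk hX) (by fun_prop)
    (ae_of_all _ fun ω => norm_mul_le_of_le (hW_bdd ω) (hδ_bdd (X ω))) hA_int hlamZ
  dsimp only at hT₃ hT₃_zero
  have hsum := integral_add hT₁ (hT₂.sub hT₃)
  simp only [Pi.sub_apply] at hsum
  rw [integral_sub hT₂ hT₃, hT₁_zero, hT₂_zero, hT₃_zero, sub_zero, add_zero] at hsum
  convert hsum using 3 with ω
  ring

/-- The efficient influence function has mean zero under the true
distribution: `E_P[ḣ(β,O,P)] = 0`, where
`ḣ(β,O,P) = (δ(β,X)·A − h(β,P)) + (ρ(X)/δ^A(X))·((2Z−1)/π_Z(X))·(M(Y,β)(1−A) − μ_Z(β,X)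
  − (A−λ_Z(X))·δ(β,X))` and `h(β,P) = E_P[δ(β,X)·ρ(X)]`. -/
theorem stmt9
    {Ω 𝒳 : Type*} [MeasurableSpace Ω] [MeasurableSpace 𝒳]
    (P : Measure Ω) [IsProbabilityMeasure P]
    (X : Ω → 𝒳) (Z A Y : Ω → ℝ)
    (hX : Measurable X) (hZ : Measurable Z) (hA : Measurable A) (hY : Measurable Y)
    (hZ01 : ∀ ω, Z ω = 0 ∨ Z ω = 1) (hA01 : ∀ ω, A ω = 0 ∨ A ω = 1)
    -- bounded measurable moment function (β fixed)
    (M : ℝ → ℝ) (hMmeas : Measurable M) (hMbdd : ∃ C, ∀ y, |M y| ≤ C)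
    -- true nuisance functions (versions of the conditional expectations)
    (π₁ ρ : 𝒳 → ℝ) (μ lam : ℝ → 𝒳 → ℝ)
    (hπmeas : Measurable π₁) (hρmeas : Measurable ρ)
    (hμmeas : ∀ z, Measurable (μ z)) (hlammeas : ∀ z, Measurable (lam z))
    (hπ : P[Z | MeasurableSpace.comap X inferInstance] =ᵐ[P] fun ω => π₁ (X ω))
    (hρ : P[A | MeasurableSpace.comap X inferInstance] =ᵐ[P] fun ω => ρ (X ω))
    (hμ : P[(fun ω => M (Y ω) * (1 - A ω)) |
        MeasurableSpace.comap (fun ω => (Z ω, X ω)) inferInstance]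
      =ᵐ[P] fun ω => μ (Z ω) (X ω))
    (hlam : P[A | MeasurableSpace.comap (fun ω => (Z ω, X ω)) inferInstance]
      =ᵐ[P] fun ω => lam (Z ω) (X ω))
    -- regularity: π₁ ∈ (c, 1−c) and δ^A nonzero (bounded away from 0)
    (c : ℝ) (hc : 0 < c)
    (hπbd : ∀ x, c ≤ π₁ x ∧ π₁ x ≤ 1 - c)
    (hδA : ∀ x, c ≤ |lam 1 x - lam 0 x|)
    (hnuisbd : ∃ C, ∀ z x, |μ z x| ≤ C ∧ |lam z x| ≤ C ∧ |ρ x| ≤ C) :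
    ∫ ω,
      (((μ 1 (X ω) - μ 0 (X ω)) / (lam 1 (X ω) - lam 0 (X ω))) * A ω
          - ∫ ω', ((μ 1 (X ω') - μ 0 (X ω')) / (lam 1 (X ω') - lam 0 (X ω'))) * ρ (X ω') ∂P)
        + (ρ (X ω) / (lam 1 (X ω) - lam 0 (X ω)))
            * ((2 * Z ω - 1) / (Z ω * π₁ (X ω) + (1 - Z ω) * (1 - π₁ (X ω))))
            * (M (Y ω) * (1 - A ω)
                - (Z ω * μ 1 (X ω) + (1 - Z ω) * μ 0 (X ω))
                - (A ω - (Z ω * lam 1 (X ω) + (1 - Z ω) * lam 0 (X ω)))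
                    * ((μ 1 (X ω) - μ 0 (X ω)) / (lam 1 (X ω) - lam 0 (X ω)))) ∂P
      = 0 :=
  stmt9_general P X Z A Y hX hZ hA hY hZ01 hA01 M hMmeas hMbdd π₁ ρ μ lam hπmeas hρmeas hμmeas
    hlammeas hρ hμ hlam c hc hπbd hδA hnuisbd
end
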